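/- arXiv:2304.01946 — 11 statements merged into one kernel-verified Lean document; each statement's English description precedes it below -/
import Mathlib

section
/- Let n ≥ 1 and let λ_0,…,λ_{n-1}, μ_1,…,μ_n, α be positive reals satisfying the condition that d_i := μ_i − λ_i is concave nondecreasing with Δd_1 = μ_1 − λ_0 > 0 (i.e., 0 ≤ d_{i+1} − d_i ≤ d_i − d_{i-1} for 1 ≤ i ≤ n−1, with d_0 := λ_0 taken so that Δd_1 > 0). Define a_1 = 1 and a_k = 1 − (λ_{k-1} μ_{k-1}) / ((α + λ_{k-2} + μ_{k-1})(α + λ_{k-1} + μ_k)) · (1/a_{k-1}) for 2 ≤ k ≤ n. Then (α + μ_k)/(α + λ_{k-1} + μ_k) < a_k < 1 for all 2 ≤ k ≤ n; in particular a_k > 0. -/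
theorem stmt_0 (n : ℕ) (hn : 1 ≤ n) (lam mu : ℕ → ℝ) (α : ℝ) (hα : 0 < α)
    (hlam : ∀ i, i + 1 ≤ n → 0 < lam i)
    (hmu : ∀ i, 1 ≤ i → i ≤ n → 0 < mu i)
    (d : ℕ → ℝ)
    (hd0 : d 0 = lam 0)
    (hd : ∀ i, 1 ≤ i → i ≤ n → d i = mu i - lam i)
    (hΔd1 : 0 < mu 1 - lam 0)
    (hconc : ∀ i, 1 ≤ i → i + 1 ≤ n →
      0 ≤ d (i + 1) - d i ∧ d (i + 1) - d i ≤ d i - d (i - 1))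
    (a : ℕ → ℝ)
    (ha1 : a 1 = 1)
    (ha : ∀ k, 2 ≤ k → k ≤ n →
      a k = 1 - lam (k - 1) * mu (k - 1) /
        ((α + lam (k - 2) + mu (k - 1)) * (α + lam (k - 1) + mu k)) * (1 / a (k - 1))) :
    ∀ k, 2 ≤ k → k ≤ n →
      (α + mu k) / (α + lam (k - 1) + mu k) < a k ∧ a k < 1 ∧ 0 < a k := by
  have key : ∀ k, 1 ≤ k → k ≤ n → (α + mu k) / (α + lam (k - 1) + mu k) < a k := by
    intro k hk
    induction k, hk using Nat.le_induction with
    | base =>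
      intro h1n
      have hl0 : 0 < lam 0 := hlam 0 (by omega)
      have hm1 : 0 < mu 1 := hmu 1 le_rfl h1n
      rw [ha1]
      rw [div_lt_one (by norm_num; positivity)]
      norm_num; linarith
    | succ k hk IH =>
      intro hkn
      have hk' : k ≤ n := by omega
      have IH' := IH hk'
      have hl : 0 < lam k := hlam k hkn
      have hl' : 0 < lam (k - 1) := hlam (k - 1) (by omega)
      have hm : 0 < mu k := hmu k hk hk'
      have hM : 0 < mu (k + 1) := hmu (k + 1) (by omega) hkn
      set A := α + lam (k - 1) + mu k with hAdef
      set B := α + lam k + mu (k + 1) with hBdef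
      have hA : 0 < A := by positivity
      have hB : 0 < B := by positivity
      have ham : 0 < α + mu k := by positivity
      have hapos : 0 < a k := lt_trans (by positivity) IH'
      have hrec := ha (k + 1) (by omega) hkn
      simp only [Nat.add_sub_cancel] at hrec
      have h2 : (k + 1 : ℕ) - 2 = k - 1 := by omega
      rw [h2] at hrec
      have h1 : 1 / a k < A / (α + mu k) := by
        rw [div_lt_div_iff₀ hapos ham]
        have := (div_lt_iff₀ hA).mp IH'
        nlinarith
      have hc : 0 < lam k * mu k / (A * B) := by positivity
      have h2' : lam k * mu k / (A * B) * (1 / a k)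
          < lam k * mu k / (A * B) * (A / (α + mu k)) :=
        mul_lt_mul_of_pos_left h1 hc
      have h3 : lam k * mu k / (A * B) * (A / (α + mu k))
          = lam k / B * (mu k / (α + mu k)) := by
        field_simp
      have h4 : mu k / (α + mu k) < 1 := by
        rw [div_lt_one ham]; linarith
      have h5 : lam k / B * (mu k / (α + mu k)) < lam k / B := by
        nth_rewrite 2 [show lam k / B = lam k / B * 1 by ring]
        exact mul_lt_mul_of_pos_left h4 (by positivity)
      have h6 : (α + mu (k + 1)) / B = 1 - lam k / B := by
        field_simp
        rw [hBdef]; ring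
      simp only [Nat.add_sub_cancel]
      rw [hrec, ← hAdef, ← hBdef, h6]
      have := h2'.trans_le (le_of_eq h3) |>.trans h5
      linarith
  intro k hk2 hkn
  have hlow := key k (by omega) hkn
  have hk1 : 1 ≤ k - 1 := by omega
  have hlow' := key (k - 1) hk1 (by omega)
  have hl' : 0 < lam (k - 1) := hlam (k - 1) (by omega)
  have hl'' : 0 < lam (k - 2) := hlam (k - 2) (by omega)
  have hm' : 0 < mu (k - 1) := hmu (k - 1) hk1 (by omega)
  have hm : 0 < mu k := hmu k (by omega) hkn
  have hapos' : 0 < a (k - 1) := lt_trans (by positivity) hlow'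
  have hrec := ha k hk2 hkn
  refine ⟨hlow, ?_, lt_trans (by positivity) hlow⟩
  rw [hrec]
  have : 0 < lam (k - 1) * mu (k - 1) /
      ((α + lam (k - 2) + mu (k - 1)) * (α + lam (k - 1) + mu k)) * (1 / a (k - 1)) := by
    positivity
  linarith
end

section
/- Let n ≥ 1, α ≥ 0, and suppose for 0 ≤ j ≤ n−1 we are given reals Δh_{j+1} ≥ 0 with Δh_{j+1} ≤ Δh_{j+2} (for j ≤ n−2), reals Δd_{j+1} with α + Δd_{j+1} > 0 and Δd_{j+2} ≤ Δd_{j+1} (for j ≤ n−2), and positive reals q_j > 0 for 1 ≤ j ≤ n−1. Define ν_0 = Δh_1/(α + Δd_1) and ν_j = ν_{j-1} + (Δh_{j+1} − ν_{j-1}(α + Δd_{j+1})) / (α + Δd_{j+1} + q_j) for 1 ≤ j ≤ n−1. Then ν_j ≤ Δh_{j+1}/(α + Δd_{j+1}) for all 0 ≤ j ≤ n−1, and ν_0 ≤ ν_1 ≤ ⋯ ≤ ν_{n-1}. -/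
theorem stmt_5 (n : ℕ) (hn : 1 ≤ n) (α : ℝ) (hα : 0 ≤ α)
    (Δh Δd q ν : ℕ → ℝ)
    (hΔh0 : ∀ j, j + 1 ≤ n → 0 ≤ Δh (j + 1))
    (hΔhmono : ∀ j, j + 2 ≤ n → Δh (j + 1) ≤ Δh (j + 2))
    (hΔd : ∀ j, j + 1 ≤ n → 0 < α + Δd (j + 1))
    (hΔdmono : ∀ j, j + 2 ≤ n → Δd (j + 2) ≤ Δd (j + 1))
    (hq : ∀ j, 1 ≤ j → j + 1 ≤ n → 0 < q j)
    (hν0 : ν 0 = Δh 1 / (α + Δd 1))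
    (hνrec : ∀ j, 1 ≤ j → j + 1 ≤ n →
      ν j = ν (j - 1) +
        (Δh (j + 1) - ν (j - 1) * (α + Δd (j + 1))) / (α + Δd (j + 1) + q j)) :
    (∀ j, j + 1 ≤ n → ν j ≤ Δh (j + 1) / (α + Δd (j + 1))) ∧
    (∀ j, 1 ≤ j → j + 1 ≤ n → ν (j - 1) ≤ ν j) := by
  have key : ∀ k, k + 2 ≤ n → ν k ≤ Δh (k + 1) / (α + Δd (k + 1)) →
      ν (k + 1) ≤ Δh (k + 2) / (α + Δd (k + 2)) ∧ ν k ≤ ν (k + 1) := by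
    intro k hk hIH
    have hD : 0 < α + Δd (k + 2) := by
      have := hΔd (k + 1) (by omega); simpa [add_assoc] using this
    have hD1 : 0 < α + Δd (k + 1) := hΔd k (by omega)
    have hQ : 0 < q (k + 1) := hq (k + 1) (by omega) (by omega)
    have hrec := hνrec (k + 1) (by omega) (by omega)
    simp only [Nat.add_sub_cancel] at hrec
    have hchain : Δh (k + 1) / (α + Δd (k + 1)) ≤ Δh (k + 2) / (α + Δd (k + 2)) := by
      apply div_le_div₀ (by
        have := hΔh0 (k + 1) (by omega); simpa [add_assoc] using this)
        (hΔhmono k hk) hD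
      have := hΔdmono k hk; linarith
    have ht : ν k ≤ Δh (k + 2) / (α + Δd (k + 2)) := le_trans hIH hchain
    have hmul : ν k * (α + Δd (k + 2)) ≤ Δh (k + 2) := by
      rw [le_div_iff₀ hD] at ht; linarith
    have hsum : 0 < α + Δd (k + 2) + q (k + 1) := by linarith
    have e : k + 1 + 1 = k + 2 := rfl
    rw [e] at hrec
    constructor
    · rw [hrec, le_div_iff₀ hD]
      have hdiv : (Δh (k + 2) - ν k * (α + Δd (k + 2))) / (α + Δd (k + 2) + q (k + 1)) *
          (α + Δd (k + 2) + q (k + 1)) = Δh (k + 2) - ν k * (α + Δd (k + 2)) :=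
        div_mul_cancel₀ _ (ne_of_gt hsum)
      have hx : 0 ≤ (Δh (k + 2) - ν k * (α + Δd (k + 2))) / (α + Δd (k + 2) + q (k + 1)) :=
        div_nonneg (by linarith) (le_of_lt hsum)
      nlinarith
    · rw [hrec]
      have : 0 ≤ (Δh (k + 2) - ν k * (α + Δd (k + 2))) / (α + Δd (k + 2) + q (k + 1)) :=
        div_nonneg (by linarith) (le_of_lt hsum)
      linarith
  have aux : ∀ j, j + 1 ≤ n → ν j ≤ Δh (j + 1) / (α + Δd (j + 1)) := by
    intro j
    induction j with
    | zero => intro _; rw [hν0]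
    | succ k ih => intro h; exact (key k h (ih (by omega))).1
  refine ⟨aux, fun j hj hjn => ?_⟩
  obtain ⟨k, rfl⟩ := Nat.exists_eq_add_of_le hj
  simp only [Nat.add_sub_cancel, Nat.add_comm 1 k] at *
  exact (key k (by omega) (aux k (by omega))).2
end

section
/- Let P(F) ⊆ ℝ^J be a nonempty polytope defined by: Σ_{j∈S} w^S_j x_j ≥ b^S for S ∈ F∖{J}, Σ_{j∈J} w^J_j x_j = b^J, and x_j ≥ 0, where w^S_j > 0 for j ∈ S ∈ F and b^S ≥ 0. Suppose π = (π_1,…,π_n) is a full F-string (i.e., S_k = {π_k,…,π_n} ∈ F for all k) and x^π is the unique solution of the triangular system Σ_{l=k}^n w^{S_k}_{π_l} x_{π_l} = b^{S_k}, 1 ≤ k ≤ n. If x^π ∈ P(F), then x^π is a vertex (extreme point) of P(F). -/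
theorem stmt_9 (n : ℕ) (F : Finset (Finset (Fin n)))
    (w : Finset (Fin n) → Fin n → ℝ) (b : Finset (Fin n) → ℝ)
    (hw : ∀ S ∈ F, ∀ j ∈ S, 0 < w S j) (hb : ∀ S ∈ F, 0 ≤ b S)
    (P : Set (Fin n → ℝ))
    (hP : P = {x | (∀ S ∈ F, S ≠ Finset.univ → b S ≤ ∑ j ∈ S, w S j * x j) ∧
      (∑ j, w Finset.univ j * x j = b Finset.univ) ∧ ∀ j, 0 ≤ x j})
    (π : Fin n → Fin n) (hπ : Function.Bijective π)
    (S : Fin n → Finset (Fin n))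
    (hS : ∀ k, S k = (Finset.Ici k).image π)
    (hSF : ∀ k, S k ∈ F)
    (x : Fin n → ℝ)
    (hx : ∀ k, ∑ l ∈ Finset.Ici k, w (S k) (π l) * x (π l) = b (S k))
    (hxP : x ∈ P) :
    x ∈ Set.extremePoints ℝ P := by
  subst hP
  have hsum' : ∀ (v : Fin n → ℝ) (k : Fin n),
      ∑ j ∈ S k, w (S k) j * v j = ∑ l ∈ Finset.Ici k, w (S k) (π l) * v (π l) := by
    intro v k
    rw [hS k, Finset.sum_image (fun a _ b _ h => hπ.1 h)]
  have hxk : ∀ k, ∑ j ∈ S k, w (S k) j * x j = b (S k) := fun k => by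
    rw [hsum', hx]
  have uniq : ∀ v : Fin n → ℝ,
      (∀ k, ∑ j ∈ S k, w (S k) j * v j = b (S k)) → v = x := by
    intro v hv
    have key : ∀ m : ℕ, ∀ k : Fin n, n - k.val ≤ m → v (π k) = x (π k) := by
      intro m
      induction m with
      | zero => intro k hk; exact absurd hk (by have := k.isLt; omega)
      | succ m ih =>
        intro k hk
        have row : ∑ l ∈ Finset.Ici k, w (S k) (π l) * (v (π l) - x (π l)) = 0 := by
          simp only [mul_sub, Finset.sum_sub_distrib]
          rw [← hsum' v k, hv k, hx k, sub_self]
        rw [← Finset.Ioi_insert, Finset.sum_insert (by simp)] at row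
        have hz : ∑ l ∈ Finset.Ioi k, w (S k) (π l) * (v (π l) - x (π l)) = 0 := by
          refine Finset.sum_eq_zero fun l hl => ?_
          have hlk : k < l := Finset.mem_Ioi.mp hl
          have : v (π l) = x (π l) := ih l (by have := Fin.lt_iff_val_lt_val.mp hlk; omega)
          rw [this, sub_self, mul_zero]
        rw [hz, add_zero] at row
        have hwpos : 0 < w (S k) (π k) :=
          hw (S k) (hSF k) (π k)
            (by rw [hS]; exact Finset.mem_image_of_mem π (Finset.mem_Ici.mpr le_rfl))
        have := mul_eq_zero.mp row
        rcases this with h | h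
        · exact absurd h hwpos.ne'
        · linarith [sub_eq_zero.mp h]
    funext j
    obtain ⟨k, rfl⟩ := hπ.2 j
    exact key n k (by omega)
  refine ⟨hxP, ?_⟩
  rintro y hy z hz ⟨a, c, ha, hc, hac, hsum⟩
  have hxj : ∀ j, x j = a * y j + c * z j := fun j => by
    rw [← hsum]; simp
  have tight : ∀ (u : Fin n → ℝ),
      (u ∈ {x : Fin n → ℝ | (∀ S ∈ F, S ≠ Finset.univ → b S ≤ ∑ j ∈ S, w S j * x j) ∧
      (∑ j, w Finset.univ j * x j = b Finset.univ) ∧ ∀ j, 0 ≤ x j}) →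
      ∀ k, b (S k) ≤ ∑ j ∈ S k, w (S k) j * u j := by
    intro u hu k
    by_cases hk : S k = Finset.univ
    · rw [hk]; rw [hu.2.1]
    · exact hu.1 (S k) (hSF k) hk
  have hcomb : ∀ k, a * (∑ j ∈ S k, w (S k) j * y j) + c * (∑ j ∈ S k, w (S k) j * z j)
      = b (S k) := by
    intro k
    rw [← hxk k]
    simp only [hxj, mul_add, Finset.sum_add_distrib, Finset.mul_sum]
    congr 1 <;> exact Finset.sum_congr rfl fun j _ => by ring
  have hmulb : ∀ k : Fin n, a * b (S k) + c * b (S k) = b (S k) := fun k => by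
    rw [← add_mul, hac, one_mul]
  have hyk : ∀ k, ∑ j ∈ S k, w (S k) j * y j = b (S k) := by
    intro k
    have h1 := tight y hy k
    have h2 := tight z hz k
    have h3 : a * (∑ j ∈ S k, w (S k) j * y j) ≤ a * b (S k) := by
      have h4 := mul_le_mul_of_nonneg_left h2 hc.le
      linarith [hcomb k, hmulb k]
    exact le_antisymm (le_of_mul_le_mul_left h3 ha) h1
  have hzk : ∀ k, ∑ j ∈ S k, w (S k) j * z j = b (S k) := by
    intro k
    have h1 := tight y hy k
    have h2 := tight z hz k
    have h3 : c * (∑ j ∈ S k, w (S k) j * z j) ≤ c * b (S k) := by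
      have h4 := mul_le_mul_of_nonneg_left h1 ha.le
      linarith [hcomb k, hmulb k]
    exact le_antisymm (le_of_mul_le_mul_left h3 hc) h2
  exact uniq y hyk
end

section
/- Given a full F-string π of a finite set J (|J| = n) with suffix sets S_k = {π_k,…,π_n}, positive coefficients w^{S_k}_j > 0 (j ∈ S_k), and costs c_j, define y^{S_1},…,y^{S_n} as the unique solution of the triangular system Σ_{l=1}^{k} w^{S_l}_{π_k} y^{S_l} = c_{π_k}, 1 ≤ k ≤ n, and set ν_{π_k} = y^{S_1} + ⋯ + y^{S_k}. Then for any vector x ∈ ℝ^J: Σ_{j∈J} c_j x_j = ν_{π_1} Σ_{j∈S_1} w^{S_1}_j x_j + Σ_{k=2}^n (ν_{π_k} − ν_{π_{k-1}}) Σ_{j∈S_k} w^{S_k}_j x_j, provided the coefficient identity Σ_{l: j∈S_l} w^{S_l}_j y^{S_l} = c_j holds for every j ∈ J (which it does, since j = π_k lies exactly in S_1,…,S_k). -/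
theorem stmt_10 (n : ℕ) (hn : 0 < n)
    (π : Fin n → Fin n) (hπ : Function.Bijective π)
    (S : ℕ → Finset (Fin n))
    (hS : ∀ k : ℕ,
      S k = Finset.image π (Finset.univ.filter (fun l : Fin n => k ≤ (l : ℕ))))
    (w : Finset (Fin n) → Fin n → ℝ)
    (hw : ∀ k : ℕ, k < n → ∀ j ∈ S k, 0 < w (S k) j)
    (c : Fin n → ℝ) (y : ℕ → ℝ) (ν : ℕ → ℝ)
    (hy : ∀ k : Fin n, ∑ l ∈ Finset.range ((k : ℕ) + 1), w (S l) (π k) * y l = c (π k))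
    (hν : ∀ k < n, ν k = ∑ l ∈ Finset.range (k + 1), y l) :
    ∀ x : Fin n → ℝ,
      ∑ j, c j * x j =
        ν 0 * ∑ j ∈ S 0, w (S 0) j * x j +
          ∑ k ∈ Finset.Ico 1 n, (ν k - ν (k - 1)) * ∑ j ∈ S k, w (S k) j * x j := by
  intro x
  have hstep : ν 0 * ∑ j ∈ S 0, w (S 0) j * x j +
      ∑ k ∈ Finset.Ico 1 n, (ν k - ν (k - 1)) * ∑ j ∈ S k, w (S k) j * x j
      = ∑ k ∈ Finset.range n, y k * ∑ j ∈ S k, w (S k) j * x j := by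
    have h0 : ν 0 = y 0 := by simpa using hν 0 hn
    have hk : ∀ k ∈ Finset.Ico 1 n, (ν k - ν (k - 1)) * ∑ j ∈ S k, w (S k) j * x j
        = y k * ∑ j ∈ S k, w (S k) j * x j := by
      intro k hk
      obtain ⟨h1, h2⟩ := Finset.mem_Ico.mp hk
      have hk1 : k - 1 + 1 = k := by omega
      rw [hν k h2, hν (k - 1) (by omega), hk1, Finset.sum_range_succ]
      ring
    rw [Finset.sum_congr rfl hk, h0, Finset.range_eq_Ico,
      Finset.sum_eq_sum_Ico_succ_bot hn]
  rw [hstep]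
  -- rewrite inner sums via the image description of S k
  have hinner : ∀ k : ℕ, y k * ∑ j ∈ S k, w (S k) j * x j
      = ∑ l : Fin n, if k ≤ (l : ℕ) then y k * (w (S k) (π l) * x (π l)) else 0 := by
    intro k
    rw [hS k, Finset.sum_image (fun a _ b _ h => hπ.injective h), Finset.mul_sum,
      Finset.sum_filter]
  calc ∑ j, c j * x j
      = ∑ l : Fin n, c (π l) * x (π l) := (Fintype.sum_bijective π hπ _ _ (fun _ => rfl)).symm
    _ = ∑ l : Fin n, ∑ k ∈ Finset.range n,
          (if k ≤ (l : ℕ) then y k * (w (S k) (π l) * x (π l)) else 0) := by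
        refine Finset.sum_congr rfl fun l _ => ?_
        have hfil : (Finset.range n).filter (fun k => k ≤ (l : ℕ))
            = Finset.range ((l : ℕ) + 1) := by
          ext k
          simp only [Finset.mem_filter, Finset.mem_range]
          omega
        rw [← Finset.sum_filter, hfil, ← hy l, Finset.sum_mul]
        exact Finset.sum_congr rfl fun k _ => by ring
    _ = ∑ k ∈ Finset.range n, y k * ∑ j ∈ S k, w (S k) j * x j := by
        rw [Finset.sum_comm]
        exact Finset.sum_congr rfl fun k _ => (hinner k).symm
end

section
/- In the setting of the previous identity, suppose additionally x̄ ∈ ℝ^J satisfies Σ_{j∈S_k} w^{S_k}_j x̄_j = b^{S_k} for all 1 ≤ k ≤ n, and that ν_{π_1} ≤ ν_{π_2} ≤ ⋯ ≤ ν_{π_n}, with ν_{π_1} ≥ 0 unnecessary but y^{S_k} = ν_{π_k} − ν_{π_{k-1}} ≥ 0 for k ≥ 2. Then for every x ∈ P(F) (i.e., satisfying Σ_{j∈S} w^S_j x_j ≥ b^S for all S ∈ F∖{J}, equality for S = J, x ≥ 0), one has Σ_{j∈J} c_j x_j ≥ Σ_{j∈J} c_j x̄_j = ν_{π_1} b^{S_1}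 + Σ_{k=2}^n (ν_{π_k} − ν_{π_{k-1}}) b^{S_k}. Hence x̄ is optimal for the LP min { c·x : x ∈ P(F) }. -/
theorem stmt_11 (n : ℕ) (hn : 0 < n)
    (F : Finset (Finset (Fin n)))
    (π : Fin n → Fin n) (hπ : Function.Bijective π)
    (S : ℕ → Finset (Fin n))
    (hS : ∀ k : ℕ,
      S k = Finset.image π (Finset.univ.filter (fun l : Fin n => k ≤ (l : ℕ))))
    (hSF : ∀ k < n, S k ∈ F)
    (w : Finset (Fin n) → Fin n → ℝ) (b : Finset (Fin n) → ℝ)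
    (hw : ∀ T ∈ F, ∀ j ∈ T, 0 < w T j) (hb : ∀ T ∈ F, 0 ≤ b T)
    (c : Fin n → ℝ) (y : ℕ → ℝ) (ν : ℕ → ℝ)
    (hy : ∀ k : Fin n, ∑ l ∈ Finset.range ((k : ℕ) + 1), w (S l) (π k) * y l = c (π k))
    (hν : ∀ k < n, ν k = ∑ l ∈ Finset.range (k + 1), y l)
    (hmono : ∀ k, 1 ≤ k → k < n → ν (k - 1) ≤ ν k)
    (xbar : Fin n → ℝ)
    (hxbar : ∀ k < n, ∑ j ∈ S k, w (S k) j * xbar j = b (S k)) :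
    (∑ j, c j * xbar j =
      ν 0 * b (S 0) + ∑ k ∈ Finset.Ico 1 n, (ν k - ν (k - 1)) * b (S k)) ∧
    ∀ x : Fin n → ℝ,
      ((∀ T ∈ F, T ≠ Finset.univ → b T ≤ ∑ j ∈ T, w T j * x j) ∧
        (∑ j, w Finset.univ j * x j = b Finset.univ) ∧ (∀ j, 0 ≤ x j)) →
      ∑ j, c j * xbar j ≤ ∑ j, c j * x j := by
  -- key identity
  have hinj := hπ.injective
  have key : ∀ x : Fin n → ℝ,
      ∑ j, c j * x j = ∑ l ∈ Finset.range n, y l * ∑ j ∈ S l, w (S l) j * x j := by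
    intro x
    have h1 : ∑ k : Fin n, c (π k) * x (π k) = ∑ j, c j * x j :=
      Fintype.sum_bijective π hπ _ _ (fun k => rfl)
    rw [← h1]
    have h2 : ∀ k : Fin n, c (π k) * x (π k) =
        ∑ l ∈ Finset.range n, (if l ≤ (k : ℕ) then w (S l) (π k) * y l * x (π k) else 0) := by
      intro k
      rw [← hy k, Finset.sum_mul]
      have hkn := k.isLt
      have hr : Finset.range ((k : ℕ) + 1) = (Finset.range n).filter (fun l => l ≤ (k : ℕ)) := by
        ext l
        simp only [Finset.mem_range, Finset.mem_filter]
        omega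
      rw [hr, Finset.sum_filter]
    calc ∑ k : Fin n, c (π k) * x (π k)
        = ∑ k : Fin n, ∑ l ∈ Finset.range n,
            (if l ≤ (k : ℕ) then w (S l) (π k) * y l * x (π k) else 0) := by
          exact Finset.sum_congr rfl fun k _ => h2 k
      _ = ∑ l ∈ Finset.range n, ∑ k : Fin n,
            (if l ≤ (k : ℕ) then w (S l) (π k) * y l * x (π k) else 0) :=
          Finset.sum_comm
      _ = ∑ l ∈ Finset.range n, y l * ∑ j ∈ S l, w (S l) j * x j := by
          refine Finset.sum_congr rfl fun l _ => ?_
          rw [hS l, Finset.sum_image (fun a _ b _ h => hinj h)]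
          rw [Finset.mul_sum, ← Finset.sum_filter]
          exact Finset.sum_congr rfl fun k _ => by ring
  -- facts
  have hS0 : S 0 = Finset.univ := by
    rw [hS 0]
    simp [Finset.filter_true_of_mem, Finset.image_univ_of_surjective hπ.surjective]
  have hyk : ∀ k, 1 ≤ k → k < n → y k = ν k - ν (k - 1) := by
    intro k h1 h2
    have e1 := hν k h2
    have e2 := hν (k - 1) (by omega)
    have : k - 1 + 1 = k := by omega
    rw [this] at e2
    rw [e1, e2, Finset.sum_range_succ]
    ring
  have hy0 : y 0 = ν 0 := by
    have := hν 0 hn; simp [Finset.sum_range_one] at this; linarith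
  have hbar : ∑ j, c j * xbar j = ∑ l ∈ Finset.range n, y l * b (S l) := by
    rw [key xbar]
    exact Finset.sum_congr rfl fun l hl => by
      rw [hxbar l (Finset.mem_range.mp hl)]
  have hsplit : ∀ f : ℕ → ℝ, ∑ l ∈ Finset.range n, f l = f 0 + ∑ l ∈ Finset.Ico 1 n, f l := by
    intro f
    rw [Finset.range_eq_Ico, Finset.sum_eq_sum_Ico_succ_bot hn]
  constructor
  · rw [hbar, hsplit, hy0]
    congr 1
    exact Finset.sum_congr rfl fun k hk => by
      obtain ⟨h1, h2⟩ := Finset.mem_Ico.mp hk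
      rw [hyk k h1 h2]
  · rintro x ⟨hineq, heq, -⟩
    rw [hbar, key x, hsplit, hsplit (fun l => y l * ∑ j ∈ S l, w (S l) j * x j)]
    have h0 : y 0 * b (S 0) = y 0 * ∑ j ∈ S 0, w (S 0) j * x j := by
      rw [hS0, heq]
    rw [h0]
    apply add_le_add (le_refl _)
    refine Finset.sum_le_sum fun k hk => ?_
    obtain ⟨h1, h2⟩ := Finset.mem_Ico.mp hk
    have hSne : S k ≠ Finset.univ := by
      intro hcontra
      have : π ⟨0, hn⟩ ∈ S k := hcontra ▸ Finset.mem_univ _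
      rw [hS k] at this
      obtain ⟨a, ha, ha2⟩ := Finset.mem_image.mp this
      have := hinj ha2
      simp only [Finset.mem_filter] at ha
      rw [this] at ha
      simp at ha
      omega
    have hyk0 : 0 ≤ y k := by
      rw [hyk k h1 h2]
      have := hmono k h1 h2
      linarith
    exact mul_le_mul_of_nonneg_left (hineq _ (hSF k h2) hSne) hyk0
end

section
/- Let ν_{π_1} ≤ ⋯ ≤ ν_{π_n} be the indices produced by the adaptive-greedy algorithm and define, for 1 ≤ m ≤ k ≤ n, ν^{S_m}_{π_k} = ν_{π_m} + (1/w^{S_m}_{π_k}) Σ_{l=m+1}^{k} (ν_{π_l} − ν_{π_{l-1}}) w^{S_l}_{π_k}, where w^S_j > 0. Then ν^{S_m}_{π_k} ≥ ν_{π_m} for all m ≤ k ≤ n; consequently ν_{π_m} = min { ν^{S_m}_{π_k} : m ≤ k ≤ n } (attained at k = m, where ν^{S_m}_{π_m} = ν_{π_m}). -/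
theorem stmt_12 (n : ℕ) (ν : ℕ → ℝ) (w : ℕ → ℕ → ℝ)
    (hw : ∀ m k, 1 ≤ m → m ≤ k → k ≤ n → 0 < w m k)
    (hmono : ∀ k, 1 ≤ k → k + 1 ≤ n → ν k ≤ ν (k + 1))
    (νS : ℕ → ℕ → ℝ)
    (hνS : ∀ m k, 1 ≤ m → m ≤ k → k ≤ n →
      νS m k = ν m + (1 / w m k) * ∑ l ∈ Finset.Icc (m + 1) k, (ν l - ν (l - 1)) * w l k) :
    (∀ m k, 1 ≤ m → m ≤ k → k ≤ n → ν m ≤ νS m k) ∧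
    (∀ m, 1 ≤ m → m ≤ n → νS m m = ν m) := by
  constructor
  · intro m k hm hmk hkn
    rw [hνS m k hm hmk hkn]
    have hsum : 0 ≤ ∑ l ∈ Finset.Icc (m + 1) k, (ν l - ν (l - 1)) * w l k := by
      apply Finset.sum_nonneg
      intro l hl
      rw [Finset.mem_Icc] at hl
      have hl1 : 1 ≤ l := le_trans (Nat.le_add_left 1 m) hl.1
      have h1 : 1 ≤ l - 1 := by omega
      have hν : ν (l - 1) ≤ ν l := by
        have := hmono (l - 1) h1 (by omega)
        rwa [Nat.sub_add_cancel hl1] at this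
      exact mul_nonneg (by linarith) (hw l k hl1 hl.2 hkn).le
    have hwpos := hw m k hm hmk hkn
    nlinarith [mul_nonneg (le_of_lt (one_div_pos.mpr hwpos)) hsum]
  · intro m hm hmn
    rw [hνS m m hm le_rfl hmn, Finset.Icc_eq_empty (by omega), Finset.sum_empty]
    ring
end

section
/- In the setting of the previous statement, assume additionally that the marginal workloads are nondecreasing in the set: w^{S_{k+1}}_j ≤ w^{S_k}_j for all j ∈ S_{k+1}, 1 ≤ k ≤ n−1 (note S_{k+1} ⊂ S_k). Define ν^{S_k}_j recursively by ν^{S_1}_j = c_j/w^{S_1}_j and ν^{S_{k}}_j = ν^{S_{k-1}}_j + (w^{S_{k-1}}_j / w^{S_k}_j − 1)(ν^{S_{k-1}}_j − ν^{S_{k-1}}_{π_{k-1}}) for j ∈ S_k. If the indices ν_{π_k} = ν^{S_k}_{π_k} are nondecreasing in k, then for each j ∈ S_{k+1}: ν^{S_k}_j ≤ ν^{S_{k+1}}_j. Consequently ν_{π_l} = max { ν^{S_k}_{π_l} : 1 ≤ k ≤ l }, i.e., the index equals the maximal marginal cost rate over the nested feasible sets containing it. -/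
theorem stmt_13 (n : ℕ) (c : ℕ → ℝ) (w : ℕ → ℕ → ℝ) (νS : ℕ → ℕ → ℝ)
    (hw : ∀ k l, 1 ≤ k → k ≤ l → l ≤ n → 0 < w k l)
    (hwmono : ∀ k l, 1 ≤ k → k + 1 ≤ l → l ≤ n → w (k + 1) l ≤ w k l)
    (hνS1 : ∀ l, 1 ≤ l → l ≤ n → νS 1 l = c l / w 1 l)
    (hνSrec : ∀ k l, 2 ≤ k → k ≤ l → l ≤ n →
      νS k l = νS (k - 1) l +
        (w (k - 1) l / w k l - 1) * (νS (k - 1) l - νS (k - 1) (k - 1)))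
    (hidx : ∀ k, 1 ≤ k → k + 1 ≤ n → νS k k ≤ νS (k + 1) (k + 1)) :
    (∀ k l, 1 ≤ k → k + 1 ≤ l → l ≤ n → νS k l ≤ νS (k + 1) l) ∧
    ∀ l, 1 ≤ l → l ≤ n →
      IsGreatest {x : ℝ | ∃ msk, 1 ≤ msk ∧ msk ≤ l ∧ x = νS msk l} (νS l l) := by
  have hA : ∀ d k l, l - k = d → 1 ≤ k → k ≤ l → l ≤ n → νS k k ≤ νS k l := by
    intro d
    induction d with
    | zero => intro k l hd h1 h2 h3; have h : k = l := (by omega); subst h; exact le_refl _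
    | succ d ih =>
      intro k l hd h1 h2 h3
      have hkl : k + 1 ≤ l := by omega
      have hrec := hνSrec (k + 1) l (by omega) hkl h3
      simp only [Nat.add_sub_cancel] at hrec
      have h1' : νS (k + 1) (k + 1) ≤ νS (k + 1) l := ih (k + 1) l (by omega) (by omega) hkl h3
      have h2' : νS k k ≤ νS (k + 1) (k + 1) := hidx k h1 (by omega)
      have hwpos : 0 < w (k + 1) l := hw (k + 1) l (by omega) hkl h3
      have hwle : w (k + 1) l ≤ w k l := hwmono k l h1 hkl h3
      have hr : 1 ≤ w k l / w (k + 1) l := (one_le_div hwpos).2 hwle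
      nlinarith [hrec, h1', h2', hr]
  have hmain : ∀ k l, 1 ≤ k → k + 1 ≤ l → l ≤ n → νS k l ≤ νS (k + 1) l := by
    intro k l h1 h2 h3
    have hrec := hνSrec (k + 1) l (by omega) h2 h3
    simp only [Nat.add_sub_cancel] at hrec
    have hA' := hA (l - k) k l rfl h1 (by omega) h3
    have hwpos : 0 < w (k + 1) l := hw (k + 1) l (by omega) h2 h3
    have hwle : w (k + 1) l ≤ w k l := hwmono k l h1 h2 h3
    have hr : 1 ≤ w k l / w (k + 1) l := (one_le_div hwpos).2 hwle
    nlinarith [hrec, hA', hr]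
  refine ⟨hmain, ?_⟩
  intro l h1 h2
  constructor
  · exact ⟨l, h1, le_refl l, rfl⟩
  · rintro x ⟨m, hm1, hm2, rfl⟩
    have key : ∀ d m, 1 ≤ m → m ≤ l → l - m = d → νS m l ≤ νS l l := by
      intro d
      induction d with
      | zero => intro m hm hml hd; have h : m = l := (by omega); subst h; exact le_refl _
      | succ d ih =>
        intro m hm hml hd
        exact le_trans (hmain m l hm (by omega) h2)
          (ih (m + 1) (by omega) (by omega) (by omega))
    exact key (l - m) m hm1 hm2 rfl
end

section
/- Consider a finite-state discounted MDP with states N, two actions a ∈ {0,1}, costs h^a_i, transition matrices P^a, discount β ∈ (0,1), and activity weights θ^1 > 0. For S ⊆ N^{{0,1}}, let b^S ∈ ℝ^N be the unique solution of b^S_i = θ^1_i + β Σ_j p^1_{ij} b^S_j for i ∈ S ∪ N^{{1}} and b^S_i = β Σ_j p^0_{ij} b^S_j for i ∈ N^{{0,1}}∖S, and set w^S_i = θ^1_i·1{i ∈ N^{{0,1}}} + β Σ_j (p^1_{ij} − p^0_{ij}) b^S_j. Then for any stationary policy u with discounted state-action occupation measures x^{a,u}_{ij} satisfying the flow equations x^{0,u}_i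 (I − βP^0) + x^{1,u}_i (I − βP^1) = e_i: b^u_i + Σ_{j∈S} w^S_j x^{0,u}_{ij} = b^S_i + Σ_{j∈N^{{0,1}}∖S} w^S_j x^{1,u}_{ij}, where b^u_i = Σ_j θ^1_j x^{1,u}_{ij}. -/
theorem stmt_14 {N : Type*} [Fintype N] [DecidableEq N]
    (C : Finset N)
    (p0 p1 : N → N → ℝ) (β : ℝ) (hβ : 0 < β ∧ β < 1)
    (θ : N → ℝ) (hθ : ∀ i, 0 < θ i)
    (hp0 : ∀ i j, 0 ≤ p0 i j) (hp1 : ∀ i j, 0 ≤ p1 i j)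
    (hp0s : ∀ i, ∑ j, p0 i j = 1) (hp1s : ∀ i, ∑ j, p1 i j = 1)
    (hunc : ∀ i ∉ C, p1 i = p0 i)
    (S : Finset N) (hSC : S ⊆ C)
    (bS : N → ℝ)
    (hbS1 : ∀ i, i ∈ S ∨ i ∉ C → bS i = θ i + β * ∑ j, p1 i j * bS j)
    (hbS0 : ∀ i ∈ C, i ∉ S → bS i = β * ∑ j, p0 i j * bS j)
    (wS : N → ℝ)
    (hwS : ∀ i, wS i = (if i ∈ C then θ i else 0) + β * ∑ j, (p1 i j - p0 i j) * bS j)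
    (i0 : N) (x0 x1 : N → ℝ)
    (hx0nn : ∀ j, 0 ≤ x0 j) (hx1nn : ∀ j, 0 ≤ x1 j)
    (hx0unc : ∀ j ∉ C, x0 j = 0)
    (hflow : ∀ j, (x0 j - β * ∑ i, x0 i * p0 i j) + (x1 j - β * ∑ i, x1 i * p1 i j) =
      if j = i0 then 1 else 0) :
    (∑ j, θ j * x1 j) + ∑ j ∈ S, wS j * x0 j =
      bS i0 + ∑ j ∈ C \ S, wS j * x1 j := by
  -- key identity: multiply flow equations by bS and sum
  have key : (∑ i, x0 i * (bS i - β * ∑ j, p0 i j * bS j))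
      + (∑ i, x1 i * (bS i - β * ∑ j, p1 i j * bS j)) = bS i0 := by
    have h1 : ∀ (p : N → N → ℝ) (x : N → ℝ),
        ∑ i, x i * (bS i - β * ∑ j, p i j * bS j)
        = ∑ j, (x j * bS j - β * (∑ i, x i * p i j) * bS j) := by
      intro p x
      calc ∑ i, x i * (bS i - β * ∑ j, p i j * bS j)
          = ∑ i, (x i * bS i - ∑ j, x i * (β * (p i j * bS j))) := by
            refine Finset.sum_congr rfl fun i _ => ?_
            rw [mul_sub]
            congr 1
            rw [Finset.mul_sum, Finset.mul_sum]
        _ = ∑ i, x i * bS i - ∑ i, ∑ j, x i * (β * (p i j * bS j)) :=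
            Finset.sum_sub_distrib _ _
        _ = ∑ j, x j * bS j - ∑ j, ∑ i, x i * (β * (p i j * bS j)) := by
            rw [Finset.sum_comm]
        _ = ∑ j, (x j * bS j - β * (∑ i, x i * p i j) * bS j) := by
            rw [← Finset.sum_sub_distrib]
            refine Finset.sum_congr rfl fun j _ => ?_
            congr 1
            rw [Finset.mul_sum, Finset.sum_mul]
            exact Finset.sum_congr rfl fun i _ => by ring
    rw [h1 p0 x0, h1 p1 x1, ← Finset.sum_add_distrib]
    have : ∀ j, (x0 j * bS j - β * (∑ i, x0 i * p0 i j) * bS j)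
        + (x1 j * bS j - β * (∑ i, x1 i * p1 i j) * bS j)
        = (if j = i0 then (1:ℝ) else 0) * bS j := by
      intro j
      rw [← hflow j]; ring
    rw [Finset.sum_congr rfl fun j _ => this j]
    simp
  -- evaluate the coefficient sums
  have h0 : ∑ i, x0 i * (bS i - β * ∑ j, p0 i j * bS j) = ∑ j ∈ S, wS j * x0 j := by
    have : ∀ i, x0 i * (bS i - β * ∑ j, p0 i j * bS j)
        = if i ∈ S then wS i * x0 i else 0 := by
      intro i
      by_cases hiS : i ∈ S
      · have hiC : i ∈ C := hSC hiS
        rw [if_pos hiS, hbS1 i (Or.inl hiS), hwS i, if_pos hiC]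
        have : ∑ j, (p1 i j - p0 i j) * bS j = (∑ j, p1 i j * bS j) - ∑ j, p0 i j * bS j := by
          rw [← Finset.sum_sub_distrib]
          exact Finset.sum_congr rfl fun j _ => by ring
        rw [this]; ring
      · rw [if_neg hiS]
        by_cases hiC : i ∈ C
        · rw [hbS0 i hiC hiS]; ring
        · rw [hx0unc i hiC]; ring
    rw [Finset.sum_congr rfl fun i _ => this i, Finset.sum_ite_mem]
    simp
  have h1 : ∑ i, x1 i * (bS i - β * ∑ j, p1 i j * bS j)
      = (∑ j, θ j * x1 j) - ∑ j ∈ C \ S, wS j * x1 j := by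
    have : ∀ i, x1 i * (bS i - β * ∑ j, p1 i j * bS j)
        = θ i * x1 i - (if i ∈ C \ S then wS i * x1 i else 0) := by
      intro i
      by_cases hiCS : i ∈ C \ S
      · obtain ⟨hiC, hiS⟩ := Finset.mem_sdiff.mp hiCS
        rw [if_pos hiCS, hbS0 i hiC hiS, hwS i, if_pos hiC]
        have : ∑ j, (p1 i j - p0 i j) * bS j = (∑ j, p1 i j * bS j) - ∑ j, p0 i j * bS j := by
          rw [← Finset.sum_sub_distrib]
          exact Finset.sum_congr rfl fun j _ => by ring
        rw [this]; ring
      · rw [if_neg hiCS]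
        have hi1 : i ∈ S ∨ i ∉ C := by
          by_cases hiC : i ∈ C
          · left
            by_contra hiS
            exact hiCS (Finset.mem_sdiff.mpr ⟨hiC, hiS⟩)
          · right; exact hiC
        rw [hbS1 i hi1]; ring
    rw [Finset.sum_congr rfl fun i _ => this i, Finset.sum_sub_distrib]
    congr 1
    rw [Finset.sum_ite_mem]
    simp
  rw [h0, h1] at key
  linarith
end

section
/- In the restless bandit setting above, define analogously v^S ∈ ℝ^N as the unique solution of v^S_i = h^1_i + β Σ_j p^1_{ij} v^S_j for i ∈ S and v^S_i = h^0_i + β Σ_j p^0_{ij} v^S_j for i ∈ N∖S, and c^S_i = h^0_i − h^1_i + β Σ_j (p^0_{ij} − p^1_{ij}) v^S_j. Then for any stationary policy u: v^S_i + Σ_{j∈S} c^S_j x^{0,u}_{ij} = v^u_i + Σ_{j∈N^{{0,1}}∖S} c^S_j x^{1,u}_{ij}, where v^u_i = Σ_j (h^0_j x^{0,u}_{ij} + h^1_j x^{1,u}_{ij}). In particular, taking u to be the (S∖{j})-active policy for j ∈ S gives v^{S∖{j}}_i = v^S_i + c^S_j x^{0,S∖{j}}_{ij}. -/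
theorem stmt_15 {N : Type*} [Fintype N] [DecidableEq N]
    (C : Finset N)
    (p0 p1 : N → N → ℝ) (h0 h1 : N → ℝ) (β : ℝ) (hβ : 0 < β ∧ β < 1)
    (hp0 : ∀ i j, 0 ≤ p0 i j) (hp1 : ∀ i j, 0 ≤ p1 i j)
    (hp0s : ∀ i, ∑ j, p0 i j = 1) (hp1s : ∀ i, ∑ j, p1 i j = 1)
    (hunc : ∀ i ∉ C, p1 i = p0 i ∧ h1 i = h0 i)
    (S : Finset N) (hSC : S ⊆ C)
    (vS : N → ℝ)
    (hvS1 : ∀ i ∈ S, vS i = h1 i + β * ∑ j, p1 i j * vS j)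
    (hvS0 : ∀ i ∉ S, vS i = h0 i + β * ∑ j, p0 i j * vS j)
    (cS : N → ℝ)
    (hcS : ∀ i, cS i = h0 i - h1 i + β * ∑ j, (p0 i j - p1 i j) * vS j)
    (i0 : N) :
    (∀ x0 x1 : N → ℝ,
      (∀ j, 0 ≤ x0 j) → (∀ j, 0 ≤ x1 j) →
      (∀ j, (x0 j - β * ∑ i, x0 i * p0 i j) + (x1 j - β * ∑ i, x1 i * p1 i j) =
        if j = i0 then 1 else 0) →
      vS i0 + ∑ j ∈ S, cS j * x0 j =
        (∑ j, (h0 j * x0 j + h1 j * x1 j)) + ∑ j ∈ C \ S, cS j * x1 j) ∧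
    ∀ j ∈ S, ∀ x0 x1 : N → ℝ,
      (∀ j', 0 ≤ x0 j') → (∀ j', 0 ≤ x1 j') →
      (∀ j', (x0 j' - β * ∑ i, x0 i * p0 i j') + (x1 j' - β * ∑ i, x1 i * p1 i j') =
        if j' = i0 then 1 else 0) →
      (∀ j' ∈ C, j' ∉ S.erase j → x1 j' = 0) →
      (∀ j', j' ∈ S.erase j ∨ j' ∉ C → x0 j' = 0) →
      ∑ j', (h0 j' * x0 j' + h1 j' * x1 j') = vS i0 + cS j * x0 j := by
  have hcS0 : ∀ i ∉ C, cS i = 0 := by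
    intro i hi
    obtain ⟨hp, hh⟩ := hunc i hi
    simp [hcS, hp, hh]
  have ha0 : ∀ i, vS i - β * ∑ j, p0 i j * vS j =
      h0 i - (if i ∈ S then cS i else 0) := by
    intro i
    by_cases hi : i ∈ S
    · have := hvS1 i hi
      simp only [hi, if_true, hcS i, sub_mul, Finset.sum_sub_distrib, mul_sub]
      linarith
    · have := hvS0 i hi
      simp only [hi, if_false]
      linarith
  have ha1 : ∀ i, vS i - β * ∑ j, p1 i j * vS j =
      h1 i + (if i ∈ S then 0 else cS i) := by
    intro i
    by_cases hi : i ∈ S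
    · have := hvS1 i hi
      simp only [hi, if_true]
      linarith
    · have := hvS0 i hi
      simp only [hi, if_false, hcS i, sub_mul, Finset.sum_sub_distrib, mul_sub]
      linarith
  have main : ∀ x0 x1 : N → ℝ,
      (∀ j, (x0 j - β * ∑ i, x0 i * p0 i j) + (x1 j - β * ∑ i, x1 i * p1 i j) =
        if j = i0 then 1 else 0) →
      vS i0 + ∑ j ∈ S, cS j * x0 j =
        (∑ j, (h0 j * x0 j + h1 j * x1 j)) + ∑ j ∈ C \ S, cS j * x1 j := by
    intro x0 x1 hc
    have e1 : vS i0 =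
        ∑ j, ((x0 j - β * ∑ i, x0 i * p0 i j) + (x1 j - β * ∑ i, x1 i * p1 i j)) * vS j := by
      simp only [hc, ite_mul, one_mul, zero_mul]
      rw [Finset.sum_ite_eq' Finset.univ i0 vS]
      simp
    have e2 : ∑ j, ((x0 j - β * ∑ i, x0 i * p0 i j) + (x1 j - β * ∑ i, x1 i * p1 i j)) * vS j
        = ∑ i, x0 i * (vS i - β * ∑ j, p0 i j * vS j)
          + ∑ i, x1 i * (vS i - β * ∑ j, p1 i j * vS j) := by
      simp only [add_mul, sub_mul, Finset.sum_add_distrib, Finset.sum_sub_distrib,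
        Finset.sum_mul, mul_sub, Finset.mul_sum]
      rw [Finset.sum_comm (f := fun j i => β * (x0 i * p0 i j) * vS j),
        Finset.sum_comm (f := fun j i => β * (x1 i * p1 i j) * vS j)]
      ring_nf
    have e3 : ∑ i, x0 i * (vS i - β * ∑ j, p0 i j * vS j)
        = ∑ i, h0 i * x0 i - ∑ j ∈ S, cS j * x0 j := by
      simp only [ha0, mul_sub, Finset.sum_sub_distrib, mul_ite, mul_zero]
      congr 1
      · exact Finset.sum_congr rfl (fun i _ => mul_comm _ _)
      · rw [Finset.sum_ite_mem, Finset.univ_inter]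
        exact Finset.sum_congr rfl (fun i _ => mul_comm _ _)
    have e4 : ∑ i, x1 i * (vS i - β * ∑ j, p1 i j * vS j)
        = ∑ i, h1 i * x1 i + ∑ j ∈ C \ S, cS j * x1 j := by
      simp only [ha1, mul_add, Finset.sum_add_distrib, mul_ite, mul_zero]
      congr 1
      · exact Finset.sum_congr rfl (fun i _ => mul_comm _ _)
      · have hvanish : ∀ i ∈ Finset.univ, i ∉ C \ S →
            (if i ∈ S then (0:ℝ) else x1 i * cS i) = 0 := by
          intro i _ hi
          simp only [Finset.mem_sdiff, not_and, not_not] at hi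
          by_cases hiS : i ∈ S
          · simp [hiS]
          · by_cases hiC : i ∈ C
            · exact absurd (hi hiC) hiS
            · simp [hiS, hcS0 i hiC]
        rw [← Finset.sum_subset (Finset.subset_univ (C \ S)) hvanish]
        refine Finset.sum_congr rfl (fun i hi => ?_)
        simp only [Finset.mem_sdiff] at hi
        simp [hi.2, mul_comm]
    have : vS i0 = ∑ i, h0 i * x0 i - ∑ j ∈ S, cS j * x0 j
        + (∑ i, h1 i * x1 i + ∑ j ∈ C \ S, cS j * x1 j) := by
      rw [e1, e2, e3, e4]
    rw [Finset.sum_add_distrib]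
    linarith
  refine ⟨fun x0 x1 _ _ hc => main x0 x1 hc, ?_⟩
  intro j hj x0 x1 _ _ hc hC hout
  have key := main x0 x1 hc
  have hz1 : ∑ j' ∈ C \ S, cS j' * x1 j' = 0 := by
    refine Finset.sum_eq_zero (fun j' hj' => ?_)
    simp only [Finset.mem_sdiff] at hj'
    have : j' ∉ S.erase j := fun h => hj'.2 (Finset.mem_of_mem_erase h)
    rw [hC j' hj'.1 this, mul_zero]
  have hz0 : ∑ j' ∈ S, cS j' * x0 j' = cS j * x0 j := by
    refine Finset.sum_eq_single j (fun j' hj' hne => ?_) (fun h => absurd hj h)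
    rw [hout j' (Or.inl (Finset.mem_erase.mpr ⟨hne, hj'⟩)), mul_zero]
  rw [hz0] at key
  rw [hz1] at key
  linarith
end

section
/- In the restless bandit setting, for j ∈ S ⊆ N^{{0,1}} with w^S_j ≠ 0 and w^{S∖{j}}_j ≠ 0: (a) v^{S∖{j}} − v^S = (c^S_j / w^S_j)(b^S − b^{S∖{j}}) as vectors in ℝ^N, and (b) c^S_j / w^S_j = c^{S∖{j}}_j / w^{S∖{j}}_j. -/
theorem stmt_16 {N : Type*} [Fintype N] [DecidableEq N]
    (C : Finset N)
    (p0 p1 : N → N → ℝ) (h0 h1 : N → ℝ) (β : ℝ) (hβ : 0 < β ∧ β < 1)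
    (θ : N → ℝ) (hθ : ∀ i, 0 < θ i)
    (hp0 : ∀ i j, 0 ≤ p0 i j) (hp1 : ∀ i j, 0 ≤ p1 i j)
    (hp0s : ∀ i, ∑ j, p0 i j = 1) (hp1s : ∀ i, ∑ j, p1 i j = 1)
    (hunc : ∀ i ∉ C, p1 i = p0 i ∧ h1 i = h0 i)
    (S : Finset N) (hSC : S ⊆ C) (j : N) (hjS : j ∈ S)
    (b : Finset N → N → ℝ)
    (hb1 : ∀ T : Finset N, T ⊆ C → ∀ i, i ∈ T ∨ i ∉ C →
      b T i = θ i + β * ∑ l, p1 i l * b T l)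
    (hb0 : ∀ T : Finset N, T ⊆ C → ∀ i ∈ C, i ∉ T →
      b T i = β * ∑ l, p0 i l * b T l)
    (w : Finset N → N → ℝ)
    (hw : ∀ T i, w T i = (if i ∈ C then θ i else 0) + β * ∑ l, (p1 i l - p0 i l) * b T l)
    (v : Finset N → N → ℝ)
    (hv1 : ∀ T : Finset N, ∀ i ∈ T, v T i = h1 i + β * ∑ l, p1 i l * v T l)
    (hv0 : ∀ T : Finset N, ∀ i ∉ T, v T i = h0 i + β * ∑ l, p0 i l * v T l)
    (c : Finset N → N → ℝ)
    (hc : ∀ T i, c T i = h0 i - h1 i + β * ∑ l, (p0 i l - p1 i l) * v T l)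
    (hwj : w S j ≠ 0) (hwj' : w (S.erase j) j ≠ 0) :
    (∀ i, v (S.erase j) i - v S i = (c S j / w S j) * (b S i - b (S.erase j) i)) ∧
    c S j / w S j = c (S.erase j) j / w (S.erase j) j := by
  obtain ⟨hβ0, hβ1⟩ := hβ
  set S' := S.erase j with hS'
  have hS'C : S' ⊆ C := (Finset.erase_subset j S).trans hSC
  have hjS' : j ∉ S' := Finset.notMem_erase j S
  set lam := c S j / w S j with hlam
  set d : N → ℝ := fun i => v S' i - v S i with hd
  set e : N → ℝ := fun i => b S i - b S' i with he
  set f : N → ℝ := fun i => d i - lam * e i with hf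
  -- sum-splitting helpers
  have hsub : ∀ (q a b' : N → ℝ), ∑ l, q l * (a l - b' l) =
      (∑ l, q l * a l) - ∑ l, q l * b' l := by
    intro q a b'
    rw [← Finset.sum_sub_distrib]
    exact Finset.sum_congr rfl fun l _ => by ring
  have hsub2 : ∀ (a b' g : N → ℝ), ∑ l, (a l - b' l) * g l =
      (∑ l, a l * g l) - ∑ l, b' l * g l := by
    intro a b' g
    rw [← Finset.sum_sub_distrib]
    exact Finset.sum_congr rfl fun l _ => by ring
  have hsumf : ∀ q : N → ℝ, ∑ l, q l * f l =
      (∑ l, q l * d l) - lam * ∑ l, q l * e l := by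
    intro q
    rw [Finset.mul_sum, ← Finset.sum_sub_distrib]
    exact Finset.sum_congr rfl fun l _ => by simp only [hf]; ring
  -- recursion away from j
  have hrec : ∀ i ≠ j, ∃ q : N → ℝ, (∀ l, 0 ≤ q l) ∧ (∑ l, q l = 1) ∧
      d i = β * ∑ l, q l * d l ∧ e i = β * ∑ l, q l * e l := by
    intro i hij
    by_cases hiS : i ∈ S
    · have hiS' : i ∈ S' := Finset.mem_erase.2 ⟨hij, hiS⟩
      refine ⟨p1 i, hp1 i, hp1s i, ?_, ?_⟩
      · simp only [hd]
        rw [hsub, hv1 S' i hiS', hv1 S i hiS]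
        ring
      · simp only [he]
        rw [hsub, hb1 S hSC i (Or.inl hiS), hb1 S' hS'C i (Or.inl hiS')]
        ring
    · have hiS' : i ∉ S' := fun h => hiS (Finset.mem_of_mem_erase h)
      refine ⟨p0 i, hp0 i, hp0s i, ?_, ?_⟩
      · simp only [hd]
        rw [hsub, hv0 S' i hiS', hv0 S i hiS]
        ring
      · by_cases hiC : i ∈ C
        · simp only [he]
          rw [hsub, hb0 S hSC i hiC hiS, hb0 S' hS'C i hiC hiS']
          ring
        · have hp := (hunc i hiC).1
          simp only [he]
          rw [hsub, ← hp, hb1 S hSC i (Or.inr hiC), hb1 S' hS'C i (Or.inr hiC)]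
          ring
  have hjC : j ∈ C := hSC hjS
  -- equations at j
  have hdj : d j = c S j + β * ∑ l, p0 j l * d l := by
    simp only [hd]
    rw [hsub, hv0 S' j hjS', hv1 S j hjS, hc, hsub2]
    ring
  have hej : e j = w S j + β * ∑ l, p0 j l * e l := by
    simp only [he]
    rw [hsub, hb1 S hSC j (Or.inl hjS), hb0 S' hS'C j hjC hjS', hw, if_pos hjC, hsub2]
    ring
  have hdj' : d j = c S' j + β * ∑ l, p1 j l * d l := by
    simp only [hd]
    rw [hsub, hv0 S' j hjS', hv1 S j hjS, hc, hsub2]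
    ring
  have hej' : e j = w S' j + β * ∑ l, p1 j l * e l := by
    simp only [he]
    rw [hsub, hb1 S hSC j (Or.inl hjS), hb0 S' hS'C j hjC hjS', hw, if_pos hjC, hsub2]
    ring
  have hlw : lam * w S j = c S j := div_mul_cancel₀ _ hwj
  -- recursion for f everywhere
  have hfrec : ∀ i, ∃ q : N → ℝ, (∀ l, 0 ≤ q l) ∧ (∑ l, q l = 1) ∧
      f i = β * ∑ l, q l * f l := by
    intro i
    by_cases hij : i = j
    · subst hij
      refine ⟨p0 i, hp0 i, hp0s i, ?_⟩
      simp only [hf]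
      rw [hsumf, hdj, hej]
      linear_combination -hlw
    · obtain ⟨q, hq0, hq1, hqd, hqe⟩ := hrec i hij
      refine ⟨q, hq0, hq1, ?_⟩
      simp only [hf]
      rw [hsumf, hqd, hqe]
      ring
  -- f = 0 by contraction
  have hf0 : ∀ i, f i = 0 := by
    obtain ⟨i0, -, hmax⟩ := Finset.exists_max_image Finset.univ (fun i => |f i|)
      ⟨j, Finset.mem_univ j⟩
    have hkey : |f i0| ≤ β * |f i0| := by
      obtain ⟨q, hq0, hq1, hqf⟩ := hfrec i0
      calc |f i0| = β * |∑ l, q l * f l| := by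
              rw [hqf, abs_mul, abs_of_pos hβ0]
        _ ≤ β * ∑ l, q l * |f l| := by
              refine mul_le_mul_of_nonneg_left ?_ hβ0.le
              refine (Finset.abs_sum_le_sum_abs _ _).trans ?_
              refine Finset.sum_le_sum fun l _ => ?_
              rw [abs_mul, abs_of_nonneg (hq0 l)]
        _ ≤ β * ∑ l, q l * |f i0| := by
              refine mul_le_mul_of_nonneg_left ?_ hβ0.le
              exact Finset.sum_le_sum fun l _ =>
                mul_le_mul_of_nonneg_left (hmax l (Finset.mem_univ l)) (hq0 l)
        _ = β * |f i0| := by rw [← Finset.sum_mul, hq1, one_mul]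
    have hi0 : |f i0| = 0 := by
      nlinarith [abs_nonneg (f i0)]
    intro i
    have := hmax i (Finset.mem_univ i)
    rw [hi0] at this
    exact abs_eq_zero.1 (le_antisymm this (abs_nonneg _))
  have hde : ∀ i, d i = lam * e i := by
    intro i
    have := hf0 i
    simp only [hf] at this
    linarith
  refine ⟨fun i => hde i, ?_⟩
  -- part (b)
  have hcs : c S' j = lam * w S' j := by
    have h1' := hdj'
    rw [hde j, hej'] at h1'
    have h2 : ∑ l, p1 j l * d l = lam * ∑ l, p1 j l * e l := by
      rw [Finset.mul_sum]
      exact Finset.sum_congr rfl fun l _ => by rw [hde l]; ring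
    rw [h2] at h1'
    linarith
  rw [hcs, mul_div_assoc, div_self hwj', mul_one]
end

section
/- In the restless bandit setting with marginal workloads w^S_j > 0, the following monotonicity holds: for j ∈ N^{{0,1}}∖S, b^{S∪{j}}_j > b^S_j, and for j ∈ S, b^S_j > b^{S∖{j}}_j. Conversely, if these strict inequalities hold for all feasible S and j, then w^S_j > 0 for all j ∈ N^{{0,1}} and feasible S. -/
/-- Sum splitting helper. -/
private lemma sum_mul_sub {N : Type*} [Fintype N] (q f g : N → ℝ) :
    ∑ l, q l * (f l - g l) = ∑ l, q l * f l - ∑ l, q l * g l := by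
  rw [← Finset.sum_sub_distrib]
  exact Finset.sum_congr rfl fun l _ => by ring

/-- Sign lemma: if δ = c + βPδ with c supported at j with value κ, P stochastic,
then δ j > 0 iff κ > 0. -/
private lemma sign_iff {N : Type*} [Fintype N] (P : N → N → ℝ)
    (hP : ∀ i l, 0 ≤ P i l) (hPs : ∀ i, ∑ l, P i l = 1)
    {β : ℝ} (hβ0 : 0 < β) (hβ1 : β < 1)
    (δ : N → ℝ) (j : N) (κ : ℝ)
    (hδj : δ j = κ + β * ∑ l, P j l * δ l)
    (hδ : ∀ i, i ≠ j → δ i = β * ∑ l, P i l * δ l) :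
    0 < κ ↔ 0 < δ j := by
  have low : ∀ (i : N) (c : ℝ), (∀ l, c ≤ δ l) → c ≤ ∑ l, P i l * δ l := by
    intro i c hc
    have h1 : ∑ l, P i l * c ≤ ∑ l, P i l * δ l :=
      Finset.sum_le_sum fun l _ => mul_le_mul_of_nonneg_left (hc l) (hP i l)
    rwa [← Finset.sum_mul, hPs i, one_mul] at h1
  have high : ∀ (i : N) (c : ℝ), (∀ l, δ l ≤ c) → ∑ l, P i l * δ l ≤ c := by
    intro i c hc
    have h1 : ∑ l, P i l * δ l ≤ ∑ l, P i l * c :=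
      Finset.sum_le_sum fun l _ => mul_le_mul_of_nonneg_left (hc l) (hP i l)
    rwa [← Finset.sum_mul, hPs i, one_mul] at h1
  constructor
  · intro hκ
    obtain ⟨i1, -, h1⟩ := Finset.exists_min_image Finset.univ δ ⟨j, Finset.mem_univ j⟩
    have h1' : ∀ l, δ i1 ≤ δ l := fun l => h1 l (Finset.mem_univ l)
    have hs : ∀ i, δ i1 ≤ ∑ l, P i l * δ l := fun i => low i _ h1'
    have key : ∀ i, β * δ i1 ≤ δ i := by
      intro i
      rcases eq_or_ne i j with rfl | h
      · rw [hδj]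
        have := mul_le_mul_of_nonneg_left (hs i) hβ0.le
        linarith
      · rw [hδ i h]
        exact mul_le_mul_of_nonneg_left (hs i) hβ0.le
    have hi1 : 0 ≤ δ i1 := by nlinarith [key i1]
    rw [hδj]
    have h2 := mul_le_mul_of_nonneg_left (hs j) hβ0.le
    nlinarith
  · intro hdj
    by_contra hκ
    push_neg at hκ
    obtain ⟨i0, -, h0⟩ := Finset.exists_max_image Finset.univ δ ⟨j, Finset.mem_univ j⟩
    have h0' : ∀ l, δ l ≤ δ i0 := fun l => h0 l (Finset.mem_univ l)
    have hs : ∀ i, ∑ l, P i l * δ l ≤ δ i0 := fun i => high i _ h0'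
    have key : ∀ i, δ i ≤ β * δ i0 := by
      intro i
      rcases eq_or_ne i j with rfl | h
      · rw [hδj]
        have := mul_le_mul_of_nonneg_left (hs i) hβ0.le
        linarith
      · rw [hδ i h]
        exact mul_le_mul_of_nonneg_left (hs i) hβ0.le
    have hi0 : δ i0 ≤ 0 := by nlinarith [key i0]
    have := h0' j
    linarith

/-- Insert case: for j ∈ C, j ∉ S, w S j > 0 iff b S j < b (insert j S) j. -/
private lemma mono_insert {N : Type*} [Fintype N] [DecidableEq N]
    (C : Finset N)
    (p0 p1 : N → N → ℝ) (β : ℝ) (hβ : 0 < β ∧ β < 1)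
    (θ : N → ℝ)
    (hp0 : ∀ i j, 0 ≤ p0 i j) (hp1 : ∀ i j, 0 ≤ p1 i j)
    (hp0s : ∀ i, ∑ j, p0 i j = 1) (hp1s : ∀ i, ∑ j, p1 i j = 1)
    (b : Finset N → N → ℝ)
    (hb1 : ∀ T : Finset N, T ⊆ C → ∀ i, i ∈ T ∨ i ∉ C →
      b T i = θ i + β * ∑ l, p1 i l * b T l)
    (hb0 : ∀ T : Finset N, T ⊆ C → ∀ i ∈ C, i ∉ T →
      b T i = β * ∑ l, p0 i l * b T l)
    (w : Finset N → N → ℝ)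
    (hw : ∀ T i, w T i = (if i ∈ C then θ i else 0) + β * ∑ l, (p1 i l - p0 i l) * b T l)
    (S : Finset N) (hS : S ⊆ C) (j : N) (hjC : j ∈ C) (hjS : j ∉ S) :
    0 < w S j ↔ b S j < b (insert j S) j := by
  set T : Finset N := insert j S with hTdef
  have hT : T ⊆ C := Finset.insert_subset hjC hS
  set δ : N → ℝ := fun i => b T i - b S i with hδdef
  set P : N → N → ℝ := fun i => if i ∈ C ∧ i ∉ T then p0 i else p1 i with hPdef
  have hP : ∀ i l, 0 ≤ P i l := by
    intro i l
    simp only [hPdef]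
    split <;> [exact hp0 i l; exact hp1 i l]
  have hPs : ∀ i, ∑ l, P i l = 1 := by
    intro i
    simp only [hPdef]
    split <;> [exact hp0s i; exact hp1s i]
  have hδj : δ j = w S j + β * ∑ l, P j l * δ l := by
    have hPj : P j = p1 j := by
      simp only [hPdef]
      rw [if_neg]
      simp [hTdef]
    rw [hPj]
    have e1 : b T j = θ j + β * ∑ l, p1 j l * b T l :=
      hb1 T hT j (Or.inl (Finset.mem_insert_self j S))
    have e2 : b S j = β * ∑ l, p0 j l * b S l := hb0 S hS j hjC hjS
    have e3 : w S j = θ j + β * ∑ l, (p1 j l - p0 j l) * b S l := by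
      rw [hw S j, if_pos hjC]
    have s1 : ∑ l, p1 j l * δ l = ∑ l, p1 j l * b T l - ∑ l, p1 j l * b S l :=
      sum_mul_sub _ _ _
    have s2 : ∑ l, (p1 j l - p0 j l) * b S l
        = ∑ l, p1 j l * b S l - ∑ l, p0 j l * b S l := by
      rw [← Finset.sum_sub_distrib]
      exact Finset.sum_congr rfl fun l _ => by ring
    simp only [hδdef]
    rw [s1, e1, e2, e3, s2]
    ring
  have hδi : ∀ i, i ≠ j → δ i = β * ∑ l, P i l * δ l := by
    intro i hij
    by_cases hcase : i ∈ C ∧ i ∉ T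
    · have hPi : P i = p0 i := by simp only [hPdef]; rw [if_pos hcase]
      have hiS : i ∉ S := fun h => hcase.2 (Finset.mem_insert_of_mem h)
      have e1 : b T i = β * ∑ l, p0 i l * b T l := hb0 T hT i hcase.1 hcase.2
      have e2 : b S i = β * ∑ l, p0 i l * b S l := hb0 S hS i hcase.1 hiS
      simp only [hδdef]
      rw [hPi, sum_mul_sub, e1, e2]
      ring
    · have hPi : P i = p1 i := by simp only [hPdef]; rw [if_neg hcase]
      have hor : (i ∈ T ∨ i ∉ C) := by tauto
      have horS : (i ∈ S ∨ i ∉ C) := by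
        rcases hor with h | h
        · rcases Finset.mem_insert.mp h with rfl | h
          · exact absurd rfl hij
          · exact Or.inl h
        · exact Or.inr h
      have e1 : b T i = θ i + β * ∑ l, p1 i l * b T l := hb1 T hT i hor
      have e2 : b S i = θ i + β * ∑ l, p1 i l * b S l := hb1 S hS i horS
      simp only [hδdef]
      rw [hPi, sum_mul_sub, e1, e2]
      ring
  have := sign_iff P hP hPs hβ.1 hβ.2 δ j (w S j) hδj hδi
  rw [this]
  simp only [hδdef]
  constructor <;> intro h <;> linarith

/-- Erase case: for j ∈ S ⊆ C, w S j > 0 iff b (S.erase j) j < b S j. -/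
private lemma mono_erase {N : Type*} [Fintype N] [DecidableEq N]
    (C : Finset N)
    (p0 p1 : N → N → ℝ) (β : ℝ) (hβ : 0 < β ∧ β < 1)
    (θ : N → ℝ)
    (hp0 : ∀ i j, 0 ≤ p0 i j) (hp1 : ∀ i j, 0 ≤ p1 i j)
    (hp0s : ∀ i, ∑ j, p0 i j = 1) (hp1s : ∀ i, ∑ j, p1 i j = 1)
    (b : Finset N → N → ℝ)
    (hb1 : ∀ T : Finset N, T ⊆ C → ∀ i, i ∈ T ∨ i ∉ C →
      b T i = θ i + β * ∑ l, p1 i l * b T l)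
    (hb0 : ∀ T : Finset N, T ⊆ C → ∀ i ∈ C, i ∉ T →
      b T i = β * ∑ l, p0 i l * b T l)
    (w : Finset N → N → ℝ)
    (hw : ∀ T i, w T i = (if i ∈ C then θ i else 0) + β * ∑ l, (p1 i l - p0 i l) * b T l)
    (S : Finset N) (hS : S ⊆ C) (j : N) (hjS : j ∈ S) :
    0 < w S j ↔ b (S.erase j) j < b S j := by
  have hjC : j ∈ C := hS hjS
  set S' : Finset N := S.erase j with hS'def
  have hS' : S' ⊆ C := (Finset.erase_subset j S).trans hS
  set δ : N → ℝ := fun i => b S i - b S' i with hδdef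
  set P : N → N → ℝ := fun i => if i ∈ C ∧ i ∉ S' then p0 i else p1 i with hPdef
  have hP : ∀ i l, 0 ≤ P i l := by
    intro i l
    simp only [hPdef]
    split <;> [exact hp0 i l; exact hp1 i l]
  have hPs : ∀ i, ∑ l, P i l = 1 := by
    intro i
    simp only [hPdef]
    split <;> [exact hp0s i; exact hp1s i]
  have hδj : δ j = w S j + β * ∑ l, P j l * δ l := by
    have hPj : P j = p0 j := by
      simp only [hPdef]
      rw [if_pos ⟨hjC, Finset.notMem_erase j S⟩]
    rw [hPj]
    have e1 : b S j = θ j + β * ∑ l, p1 j l * b S l := hb1 S hS j (Or.inl hjS)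
    have e2 : b S' j = β * ∑ l, p0 j l * b S' l :=
      hb0 S' hS' j hjC (Finset.notMem_erase j S)
    have e3 : w S j = θ j + β * ∑ l, (p1 j l - p0 j l) * b S l := by
      rw [hw S j, if_pos hjC]
    have s1 : ∑ l, p0 j l * δ l = ∑ l, p0 j l * b S l - ∑ l, p0 j l * b S' l :=
      sum_mul_sub _ _ _
    have s2 : ∑ l, (p1 j l - p0 j l) * b S l
        = ∑ l, p1 j l * b S l - ∑ l, p0 j l * b S l := by
      rw [← Finset.sum_sub_distrib]
      exact Finset.sum_congr rfl fun l _ => by ring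
    simp only [hδdef]
    rw [s1, e1, e2, e3, s2]
    ring
  have hδi : ∀ i, i ≠ j → δ i = β * ∑ l, P i l * δ l := by
    intro i hij
    by_cases hcase : i ∈ C ∧ i ∉ S'
    · have hPi : P i = p0 i := by simp only [hPdef]; rw [if_pos hcase]
      have hiS : i ∉ S := by
        intro h
        exact hcase.2 (Finset.mem_erase.mpr ⟨hij, h⟩)
      have e1 : b S i = β * ∑ l, p0 i l * b S l := hb0 S hS i hcase.1 hiS
      have e2 : b S' i = β * ∑ l, p0 i l * b S' l := hb0 S' hS' i hcase.1 hcase.2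
      simp only [hδdef]
      rw [hPi, sum_mul_sub, e1, e2]
      ring
    · have hPi : P i = p1 i := by simp only [hPdef]; rw [if_neg hcase]
      have hor : (i ∈ S' ∨ i ∉ C) := by tauto
      have horS : (i ∈ S ∨ i ∉ C) := by
        rcases hor with h | h
        · exact Or.inl (Finset.mem_of_mem_erase h)
        · exact Or.inr h
      have e1 : b S i = θ i + β * ∑ l, p1 i l * b S l := hb1 S hS i horS
      have e2 : b S' i = θ i + β * ∑ l, p1 i l * b S' l := hb1 S' hS' i hor
      simp only [hδdef]
      rw [hPi, sum_mul_sub, e1, e2]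
      ring
  have := sign_iff P hP hPs hβ.1 hβ.2 δ j (w S j) hδj hδi
  rw [this]
  simp only [hδdef]
  constructor <;> intro h <;> linarith

theorem stmt_17 {N : Type*} [Fintype N] [DecidableEq N]
    (C : Finset N)
    (p0 p1 : N → N → ℝ) (β : ℝ) (hβ : 0 < β ∧ β < 1)
    (θ : N → ℝ) (hθ : ∀ i, 0 < θ i)
    (hp0 : ∀ i j, 0 ≤ p0 i j) (hp1 : ∀ i j, 0 ≤ p1 i j)
    (hp0s : ∀ i, ∑ j, p0 i j = 1) (hp1s : ∀ i, ∑ j, p1 i j = 1)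
    (hunc : ∀ i ∉ C, p1 i = p0 i)
    (F : Finset (Finset N)) (hF : ∀ S ∈ F, S ⊆ C)
    (b : Finset N → N → ℝ)
    (hb1 : ∀ T : Finset N, T ⊆ C → ∀ i, i ∈ T ∨ i ∉ C →
      b T i = θ i + β * ∑ l, p1 i l * b T l)
    (hb0 : ∀ T : Finset N, T ⊆ C → ∀ i ∈ C, i ∉ T →
      b T i = β * ∑ l, p0 i l * b T l)
    (w : Finset N → N → ℝ)
    (hw : ∀ T i, w T i = (if i ∈ C then θ i else 0) + β * ∑ l, (p1 i l - p0 i l) * b T l) :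
    (∀ S ∈ F, ∀ j ∈ C, 0 < w S j) ↔
      (∀ S ∈ F, (∀ j ∈ C, j ∉ S → b S j < b (insert j S) j) ∧
        (∀ j ∈ S, b (S.erase j) j < b S j)) := by
  constructor
  · intro h S hSF
    have hS := hF S hSF
    constructor
    · intro j hjC hjS
      exact (mono_insert C p0 p1 β hβ θ hp0 hp1 hp0s hp1s b hb1 hb0 w hw S hS j hjC hjS).mp
        (h S hSF j hjC)
    · intro j hjS
      exact (mono_erase C p0 p1 β hβ θ hp0 hp1 hp0s hp1s b hb1 hb0 w hw S hS j hjS).mp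
        (h S hSF j (hS hjS))
  · intro h S hSF j hjC
    have hS := hF S hSF
    by_cases hjS : j ∈ S
    · exact (mono_erase C p0 p1 β hβ θ hp0 hp1 hp0s hp1s b hb1 hb0 w hw S hS j hjS).mpr
        ((h S hSF).2 j hjS)
    · exact (mono_insert C p0 p1 β hβ θ hp0 hp1 hp0s hp1s b hb1 hb0 w hw S hS j hjC hjS).mpr
        ((h S hSF).1 j hjC hjS)
end
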